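/- Rank-2 multiplicity-free Macdonald identity for the affine case a = b = 2: in the ring of formal power series ℤ[[x, y]] (x = e^{−α₀}, y = e^{−α₁}), with W the infinite dihedral group generated by s₀, s₁ acting by s₀: (α₀, α₁) ↦ (−α₀, α₁ + 2α₀), s₁: (α₀, α₁) ↦ (α₀ + 2α₁, −α₁), the identity ∑_{w ∈ W} w(1/((1−e^{−α₀})(1−e^{−α₁}))) = 1 + ∑_{n ≥ 1} e^{−nδ} holds, where δ = α₀ + α₁ and each summand w(1/((1−e^{−α₀})(1−e^{−α₁}))) is expanded via the highest-weight convention: w(1/(1−e^{−α}))⁻expansion is 1 + e^{−wα} + e^{−2wα} + ⋯ when wα is a positive root, and −e^{wα} − e^{2wα} − ⋯ when wα is negative. -/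

import Mathlib

/-! The rank-2 `multiplicity-free Macdonald identity' for affine `sl₂`.
Root lattice `ℤα₀ ⊕ ℤα₁`, Cartan matrix `[[2,-2],[-2,2]]`; a vector
`m α₀ + m' α₁` is the row vector `![m, m']`, the Weyl group element `w` acts by
`v ↦ Matrix.vecMul v w`; formal exponentials live in `ℤ[[x, y]]` with
`x = e^{-α₀}`, `y = e^{-α₁}`, so `e^{-(m α₀ + m' α₁)} = x^m y^{m'}`. -/

/-- The simple reflection `s₀`. -/
def affS₀ : (Matrix (Fin 2) (Fin 2) ℤ)ˣ :=
  ⟨!![-1, 0; 2, 1], !![-1, 0; 2, 1],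
    by rw [Matrix.mul_fin_two, Matrix.one_fin_two]; norm_num,
    by rw [Matrix.mul_fin_two, Matrix.one_fin_two]; norm_num⟩

/-- The simple reflection `s₁`. -/
def affS₁ : (Matrix (Fin 2) (Fin 2) ℤ)ˣ :=
  ⟨!![1, 2; 0, -1], !![1, 2; 0, -1],
    by rw [Matrix.mul_fin_two, Matrix.one_fin_two]; norm_num,
    by rw [Matrix.mul_fin_two, Matrix.one_fin_two]; norm_num⟩

open Classical in
/-- The `highest weight' expansion of `w (1/(1 - e^{-α}))` attached to the
root `β = w α`: the geometric series `1 + e^{-β} + e^{-2β} + ⋯` if `β > 0`,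
and `-e^{β} - e^{2β} - ⋯` if `β < 0`, as a power series in `x, y`. -/
noncomputable def hwExpand (β : Fin 2 → ℤ) : MvPowerSeries (Fin 2) ℤ :=
  if 0 ≤ β 0 ∧ 0 ≤ β 1 then
    (fun d : Fin 2 →₀ ℕ => if ∃ k : ℕ, ∀ i, (d i : ℤ) = k * β i then 1 else 0)
  else
    (fun d : Fin 2 →₀ ℕ =>
      if ∃ k : ℕ, 1 ≤ k ∧ ∀ i, (d i : ℤ) = -(k * β i) then -1 else 0)

/-- The summand `w (1/((1-e^{-α₀})(1-e^{-α₁})))`, expanded via the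
highest-weight convention applied to each factor. -/
noncomputable def macdonaldTerm (w : (Matrix (Fin 2) (Fin 2) ℤ)ˣ) :
    MvPowerSeries (Fin 2) ℤ :=
  hwExpand (Matrix.vecMul ![1, 0] (w : Matrix (Fin 2) (Fin 2) ℤ)) *
    hwExpand (Matrix.vecMul ![0, 1] (w : Matrix (Fin 2) (Fin 2) ℤ))

/-! The Weyl group is the infinite dihedral group. Its elements are indexed by their signed length
`n ∈ ℤ`, and up to order the element of signed length `n` sends `(α₀, α₁)` to
`((n+1)α₀ + nα₁, -(nα₀ + (n-1)α₁))`. For `n ≥ 1` the summand is therefore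
`-∑ e^{-(jβ + kγ)}` over `j ≥ 1, k ≥ 0`, with `β = nα₀ + (n-1)α₁` and `γ = (n+1)α₀ + nα₁`. Since
`det(β, γ) = 1`, each monomial `x^p y^q` occurs at most once, and it occurs exactly when `q < p`
and `n - 1 = ⌊q / (p - q)⌋`. The case `n ≤ -1` is the same with `p` and `q` swapped. So the
coefficient of `x^p y^q` is `1`, from `w = 1`, minus `1` if `p ≠ q`. -/

open DihedralGroup MvPowerSeries

def rotMatrix (k : ℤ) : Matrix (Fin 2) (Fin 2) ℤ :=
  !![1 + 2 * k, 2 * k; -(2 * k), 1 - 2 * k]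

def reflMatrix (k : ℤ) : Matrix (Fin 2) (Fin 2) ℤ :=
  !![-1 - 2 * k, -(2 * k); 2 + 2 * k, 1 + 2 * k]

lemma rotMatrix_zero : rotMatrix 0 = 1 := by
  simp [rotMatrix, Matrix.one_fin_two]

lemma rotMatrix_mul_rotMatrix (a b : ℤ) : rotMatrix a * rotMatrix b = rotMatrix (a + b) := by
  simp only [rotMatrix, Matrix.mul_fin_two]; congr 1; ring_nf

lemma rotMatrix_mul_reflMatrix (a b : ℤ) : rotMatrix a * reflMatrix b = reflMatrix (b - a) := by
  simp only [rotMatrix, reflMatrix, Matrix.mul_fin_two]; congr 1; ring_nf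

lemma reflMatrix_mul_rotMatrix (a b : ℤ) : reflMatrix a * rotMatrix b = reflMatrix (a + b) := by
  simp only [rotMatrix, reflMatrix, Matrix.mul_fin_two]; congr 1; ring_nf

lemma reflMatrix_mul_reflMatrix (a b : ℤ) : reflMatrix a * reflMatrix b = rotMatrix (b - a) := by
  simp only [rotMatrix, reflMatrix, Matrix.mul_fin_two]; congr 1; ring_nf

def weylMatrix : DihedralGroup 0 → Matrix (Fin 2) (Fin 2) ℤ
  | r k => rotMatrix k
  | sr k => reflMatrix k

-- `r k ↦ (s₁ s₀)^k` and `sr k ↦ s₀ (s₁ s₀)^k`.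
def weylRep : DihedralGroup 0 →* (Matrix (Fin 2) (Fin 2) ℤ)ˣ :=
  MonoidHom.toHomUnits
    { toFun := weylMatrix
      map_one' := by
        simp only [one_def, weylMatrix]; exact rotMatrix_zero
      map_mul' := by
        rintro (a | a) (b | b) <;> simp only [r_mul_r, r_mul_sr, sr_mul_r, sr_mul_sr, weylMatrix]
        exacts [(rotMatrix_mul_rotMatrix a b).symm, (rotMatrix_mul_reflMatrix a b).symm,
          (reflMatrix_mul_rotMatrix a b).symm, (reflMatrix_mul_reflMatrix a b).symm] }

lemma DihedralGroup.closure_sr_zero_sr_neg_one :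
    Subgroup.closure {sr 0, sr (-1)} = (⊤ : Subgroup (DihedralGroup 0)) := by
  have h₀ : sr 0 ∈ Subgroup.closure {sr (0 : ZMod 0), sr (-1)} := Subgroup.subset_closure (by simp)
  have h₁ : sr (-1) ∈ Subgroup.closure {sr (0 : ZMod 0), sr (-1)} :=
    Subgroup.subset_closure (by simp)
  have hr (k : ℤ) : r k ∈ Subgroup.closure {sr (0 : ZMod 0), sr (-1)} := by
    have := Subgroup.zpow_mem _ (Subgroup.mul_mem _ h₁ h₀) k
    rw [sr_mul_sr, sub_neg_eq_add, zero_add, r_one_zpow] at this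
    exact this
  refine eq_top_iff.2 fun x _ => ?_
  rcases x with k | k
  · exact hr k
  · simpa [sr_mul_r] using Subgroup.mul_mem _ h₀ (hr k)

lemma weylRep_sr_zero : weylRep (sr 0) = affS₀ := by
  ext : 1; simp [weylRep, weylMatrix, reflMatrix, affS₀]

lemma weylRep_sr_neg_one : weylRep (sr (-1)) = affS₁ := by
  ext : 1; simp [weylRep, weylMatrix, reflMatrix, affS₁]

lemma range_weylRep : weylRep.range = Subgroup.closure {affS₀, affS₁} := by
  rw [MonoidHom.range_eq_map, ← closure_sr_zero_sr_neg_one, MonoidHom.map_closure, Set.image_pair,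
    weylRep_sr_zero, weylRep_sr_neg_one]

lemma weylRep_injective : Function.Injective weylRep := by
  refine (injective_iff_map_eq_one _).2 fun x hx => ?_
  have h := congrArg (fun u : (Matrix (Fin 2) (Fin 2) ℤ)ˣ => (u : Matrix (Fin 2) (Fin 2) ℤ)) hx
  rcases x with (k : ℤ) | (k : ℤ)
  · have h₀₁ : 2 * k = 0 := by
      simpa [weylRep, weylMatrix, rotMatrix] using congrFun (congrFun h 0) 1
    rw [show k = 0 by omega]; exact r_zero
  · have h₀₀ : -1 - 2 * k = 1 := by
      simpa [weylRep, weylMatrix, reflMatrix] using congrFun (congrFun h 0) 0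
    have h₁₁ : 1 + 2 * k = 1 := by
      simpa [weylRep, weylMatrix, reflMatrix] using congrFun (congrFun h 1) 1
    omega

noncomputable def weylEquiv : DihedralGroup 0 ≃* Subgroup.closure {affS₀, affS₁} :=
  (MonoidHom.ofInjective weylRep_injective).trans (MulEquiv.subgroupCongr range_weylRep)

-- `|signedLength w|` is the length of `w`; the sign separates the two elements of each length.
def signedLength : DihedralGroup 0 → ℤ
  | r (k : ℤ) => 2 * k
  | sr (k : ℤ) => 2 * k + 1

lemma signedLength_bijective : Function.Bijective signedLength := by
  refine ⟨?_, fun n => ?_⟩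
  · rintro ((a : ℤ) | (a : ℤ)) ((b : ℤ) | (b : ℤ)) h <;> simp only [signedLength] at h
    · rw [show a = b by omega]
    · omega
    · omega
    · rw [show a = b by omega]
  · obtain ⟨k, rfl | rfl⟩ := Int.even_or_odd' n
    exacts [⟨r k, rfl⟩, ⟨sr k, rfl⟩]

noncomputable def weylTerm (n : ℤ) : MvPowerSeries (Fin 2) ℤ :=
  hwExpand ![n + 1, n] * hwExpand ![-n, 1 - n]

lemma macdonaldTerm_weylEquiv (x : DihedralGroup 0) :
    macdonaldTerm (weylEquiv x) = weylTerm (signedLength x) := by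
  change macdonaldTerm (weylRep x) = _
  rw [macdonaldTerm, weylTerm]
  rcases x with (k : ℤ) | (k : ℤ)
  · congr 2 <;> ext i <;> fin_cases i <;>
      simp [weylRep, weylMatrix, rotMatrix, signedLength, add_comm]
  · rw [mul_comm]
    congr 2 <;> ext i <;> fin_cases i <;> simp [weylRep, weylMatrix, reflMatrix, signedLength] <;>
      ring

lemma eq_and_eq_of_smul_add_smul_eq {β γ : Fin 2 → ℕ} (hdet : β 0 * γ 1 ≠ β 1 * γ 0)
    {j k j' k' : ℕ} (h : j • β + k • γ = j' • β + k' • γ) : j = j' ∧ k = k' := by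
  have h₀ : (j : ℤ) * β 0 + k * γ 0 = j' * β 0 + k' * γ 0 := by
    exact_mod_cast congrFun h 0
  have h₁ : (j : ℤ) * β 1 + k * γ 1 = j' * β 1 + k' * γ 1 := by
    exact_mod_cast congrFun h 1
  have hdet' : (β 0 : ℤ) * γ 1 - β 1 * γ 0 ≠ 0 := sub_ne_zero.2 (by exact_mod_cast hdet)
  have hj : ((j : ℤ) - j') * (β 0 * γ 1 - β 1 * γ 0) = 0 := by
    linear_combination (γ 1 : ℤ) * h₀ - γ 0 * h₁
  have hk : ((k : ℤ) - k') * (β 0 * γ 1 - β 1 * γ 0) = 0 := by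
    linear_combination (β 0 : ℤ) * h₁ - β 1 * h₀
  have hj' := (mul_eq_zero.1 hj).resolve_right hdet'
  have hk' := (mul_eq_zero.1 hk).resolve_right hdet'
  omega

open Finset.HasAntidiagonal Classical in
lemma coeff_mul_eq_ite_of_cone {f g : MvPowerSeries (Fin 2) ℤ} {β γ : Fin 2 → ℕ}
    {P Q : ℕ → Prop} {a b : ℤ}
    (hf : ∀ e, coeff e f = if ∃ j, P j ∧ ⇑e = j • β then a else 0)
    (hg : ∀ e, coeff e g = if ∃ k, Q k ∧ ⇑e = k • γ then b else 0)
    (hdet : β 0 * γ 1 ≠ β 1 * γ 0) (d : Fin 2 →₀ ℕ) :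
    coeff d (f * g) = if ∃ j k, P j ∧ Q k ∧ ⇑d = j • β + k • γ then a * b else 0 := by
  rw [coeff_mul]
  split_ifs with h
  · obtain ⟨j, k, hj, hk, hd⟩ := h
    let x : (Fin 2 →₀ ℕ) × (Fin 2 →₀ ℕ) :=
      (Finsupp.equivFunOnFinite.symm (j • β), Finsupp.equivFunOnFinite.symm (k • γ))
    have hx : x ∈ antidiagonal d := by
      rw [mem_antidiagonal]; ext i; simp [x, hd]
    rw [Finset.sum_eq_single_of_mem x hx, hf, hg, if_pos ⟨j, hj, rfl⟩, if_pos ⟨k, hk, rfl⟩]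
    rintro y hy hyx
    rw [hf, hg]
    split_ifs with h₁ h₂
    · obtain ⟨j', -, hy₁⟩ := h₁
      obtain ⟨k', -, hy₂⟩ := h₂
      have hd' : j' • β + k' • γ = j • β + k • γ := by
        rw [← hy₁, ← hy₂, ← hd, ← Finsupp.coe_add, mem_antidiagonal.1 hy]
      obtain ⟨rfl, rfl⟩ := eq_and_eq_of_smul_add_smul_eq hdet hd'
      exact (hyx (Prod.ext (DFunLike.coe_injective hy₁) (DFunLike.coe_injective hy₂))).elim
    all_goals simp only [mul_zero, zero_mul]
  · refine Finset.sum_eq_zero fun y hy => ?_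
    rw [hf, hg]
    split_ifs with h₁ h₂
    · obtain ⟨j, hj, hy₁⟩ := h₁
      obtain ⟨k, hk, hy₂⟩ := h₂
      exact (h ⟨j, k, hj, hk, by rw [← hy₁, ← hy₂, ← Finsupp.coe_add, mem_antidiagonal.1 hy]⟩).elim
    all_goals simp only [mul_zero, zero_mul]

open Classical in
lemma coeff_hwExpand_natCast (β : Fin 2 → ℕ) (e : Fin 2 →₀ ℕ) :
    coeff e (hwExpand (Nat.cast ∘ β)) = if ∃ k : ℕ, ⇑e = k • β then 1 else 0 := by
  have hnonneg : 0 ≤ (Nat.cast ∘ β : Fin 2 → ℤ) 0 ∧ 0 ≤ (Nat.cast ∘ β : Fin 2 → ℤ) 1 :=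
    ⟨Nat.cast_nonneg _, Nat.cast_nonneg _⟩
  calc coeff e (hwExpand (Nat.cast ∘ β))
      = if ∃ k : ℕ, ∀ i, (e i : ℤ) = k * (Nat.cast ∘ β) i then 1 else 0 := by
        simp only [hwExpand, hnonneg]; rfl
    _ = _ := by
        simp only [funext_iff, Function.comp_apply, Pi.smul_apply, smul_eq_mul]
        norm_cast

open Classical in
lemma coeff_hwExpand_neg_natCast {β : Fin 2 → ℕ} (hβ : β ≠ 0) (e : Fin 2 →₀ ℕ) :
    coeff e (hwExpand (-(Nat.cast ∘ β))) = if ∃ k : ℕ, 1 ≤ k ∧ ⇑e = k • β then -1 else 0 := by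
  have hneg : ¬ (0 ≤ (-(Nat.cast ∘ β) : Fin 2 → ℤ) 0 ∧ 0 ≤ (-(Nat.cast ∘ β) : Fin 2 → ℤ) 1) := by
    refine fun h => hβ (funext fun i => ?_)
    fin_cases i <;> simp at h ⊢ <;> omega
  calc coeff e (hwExpand (-(Nat.cast ∘ β)))
      = if ∃ k : ℕ, 1 ≤ k ∧ ∀ i, (e i : ℤ) = -(k * (-(Nat.cast ∘ β) : Fin 2 → ℤ) i) then -1
        else 0 := by
        simp only [hwExpand, hneg]; rfl
    _ = _ := by
        simp only [funext_iff, Pi.neg_apply, Function.comp_apply, mul_neg, neg_neg, Pi.smul_apply,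
          smul_eq_mul]
        norm_cast

lemma exists_decomp_iff_eq_div (m p q : ℕ) :
    (∃ j k : ℕ, 1 ≤ j ∧ p = j * (m + 1) + k * (m + 2) ∧ q = j * m + k * (m + 1)) ↔
      q < p ∧ m = q / (p - q) := by
  constructor
  · rintro ⟨j, k, hj, rfl, rfl⟩
    have hp : j * (m + 1) + k * (m + 2) = (j * m + k * (m + 1)) + (j + k) := by ring
    have hq : j * m + k * (m + 1) = (j + k) * m + k := by ring
    rw [hp, Nat.add_sub_cancel_left, hq, Nat.mul_add_div (by omega), Nat.div_eq_of_lt (by omega)]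
    omega
  · rintro ⟨hlt, rfl⟩
    obtain ⟨s, rfl⟩ : ∃ s, p = q + s := ⟨p - q, by omega⟩
    rw [Nat.add_sub_cancel_left]
    have hdiv := Nat.div_add_mod q s
    have hmod := Nat.mod_lt q (by omega : 0 < s)
    refine ⟨s - q % s, q % s, by omega, ?_, ?_⟩ <;> zify [hmod.le] at hdiv ⊢ <;>
      linear_combination -hdiv

lemma weylTerm_natCast_succ (m : ℕ) :
    weylTerm (m + 1) =
      hwExpand (-(Nat.cast ∘ ![m + 1, m])) * hwExpand (Nat.cast ∘ ![m + 2, m + 1]) := by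
  rw [weylTerm, mul_comm]
  congr 2 <;> ext i <;> fin_cases i <;> simp
  ring

lemma weylTerm_negSucc (m : ℕ) :
    weylTerm (Int.negSucc m) =
      hwExpand (-(Nat.cast ∘ ![m, m + 1])) * hwExpand (Nat.cast ∘ ![m + 1, m + 2]) := by
  rw [weylTerm, Int.negSucc_eq]
  congr 2 <;> ext i <;> fin_cases i <;> simp
  ring

open Classical in
lemma coeff_weylTerm_zero (d : Fin 2 →₀ ℕ) : coeff d (weylTerm 0) = 1 := by
  have h : weylTerm 0 = hwExpand (Nat.cast ∘ ![1, 0]) * hwExpand (Nat.cast ∘ ![0, 1]) := by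
    rw [weylTerm]; congr 2 <;> ext i <;> fin_cases i <;> simp
  rw [h, coeff_mul_eq_ite_of_cone (P := fun _ => True) (Q := fun _ => True)
    (fun e => by simpa only [true_and] using coeff_hwExpand_natCast ![1, 0] e)
    (fun e => by simpa only [true_and] using coeff_hwExpand_natCast ![0, 1] e) (by decide),
    if_pos, mul_one]
  exact ⟨d 0, d 1, trivial, trivial, by ext i; fin_cases i <;> simp⟩

open Classical in
lemma coeff_weylTerm_natCast_succ (m : ℕ) (d : Fin 2 →₀ ℕ) :
    coeff d (weylTerm (m + 1)) = if d 1 < d 0 ∧ m = d 1 / (d 0 - d 1) then -1 else 0 := by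
  rw [weylTerm_natCast_succ, coeff_mul_eq_ite_of_cone (Q := fun _ => True)
    (coeff_hwExpand_neg_natCast (by simp))
    (fun e => by simpa only [true_and] using coeff_hwExpand_natCast ![m + 2, m + 1] e)
    (by simp; ring_nf; omega), mul_one]
  refine if_congr ?_ rfl rfl
  rw [← exists_decomp_iff_eq_div]
  simp [funext_iff, Fin.forall_fin_two]

open Classical in
lemma coeff_weylTerm_negSucc (m : ℕ) (d : Fin 2 →₀ ℕ) :
    coeff d (weylTerm (Int.negSucc m)) = if d 0 < d 1 ∧ m = d 0 / (d 1 - d 0) then -1 else 0 := by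
  rw [weylTerm_negSucc, coeff_mul_eq_ite_of_cone (Q := fun _ => True)
    (coeff_hwExpand_neg_natCast (by simp))
    (fun e => by simpa only [true_and] using coeff_hwExpand_natCast ![m + 1, m + 2] e)
    (by simp; ring_nf; omega), mul_one]
  refine if_congr ?_ rfl rfl
  rw [← exists_decomp_iff_eq_div]
  simp [funext_iff, Fin.forall_fin_two, and_comm]

lemma finsum_coeff_weylTerm (d : Fin 2 →₀ ℕ) :
    ∑ᶠ n : ℤ, coeff d (weylTerm n) = if d 0 = d 1 then 1 else 0 := by
  have hsupp : Function.support (fun n : ℤ => coeff d (weylTerm n)) ⊆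
      ({0, ((d 1 / (d 0 - d 1) : ℕ) : ℤ) + 1, Int.negSucc (d 0 / (d 1 - d 0))} : Finset ℤ) := by
    intro n hn
    rw [Function.mem_support] at hn
    rcases n with (_ | m) | m
    · simp
    · rw [Int.ofNat_eq_natCast, Nat.cast_succ, coeff_weylTerm_natCast_succ] at hn
      obtain ⟨-, rfl⟩ := (ite_ne_right_iff.1 hn).1
      simp
    · rw [coeff_weylTerm_negSucc] at hn
      obtain ⟨-, rfl⟩ := (ite_ne_right_iff.1 hn).1
      simp
  have hpos : (0 : ℤ) < ((d 1 / (d 0 - d 1) : ℕ) : ℤ) + 1 := by positivity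
  have hneg : Int.negSucc (d 0 / (d 1 - d 0)) < 0 := Int.negSucc_lt_zero _
  rw [finsum_eq_sum_of_support_subset _ hsupp,
    Finset.sum_insert (by simp only [Finset.mem_insert, Finset.mem_singleton]; omega),
    Finset.sum_pair (by omega), coeff_weylTerm_zero, coeff_weylTerm_natCast_succ,
    coeff_weylTerm_negSucc]
  split_ifs <;> omega

/-- Rank-2 multiplicity-free Macdonald identity for affine `sl₂`:
`∑_{w ∈ W} w (1/((1-e^{-α₀})(1-e^{-α₁}))) = 1 + ∑_{n ≥ 1} e^{-nδ}` with
`δ = α₀ + α₁`, i.e. coefficientwise in `ℤ[[x, y]]`: for every exponent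
`d = (p, q)`, the (finitely supported) sum over `w ∈ W` of the coefficients of
`x^p y^q` in the summands equals `1` if `p = q` and `0` otherwise. -/
theorem multiplicity_free_macdonald_affine_sl2 :
    ∀ d : Fin 2 →₀ ℕ,
      (∑ᶠ w : Subgroup.closure {affS₀, affS₁},
          MvPowerSeries.coeff d (macdonaldTerm (w : (Matrix (Fin 2) (Fin 2) ℤ)ˣ))) =
        if d 0 = d 1 then 1 else 0 := by
  intro d
  calc ∑ᶠ w : Subgroup.closure {affS₀, affS₁}, coeff d (macdonaldTerm w)
      = ∑ᶠ x, coeff d (macdonaldTerm (weylEquiv x)) :=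
        (finsum_comp_equiv weylEquiv.toEquiv).symm
    _ = ∑ᶠ x, coeff d (weylTerm (signedLength x)) := by simp_rw [macdonaldTerm_weylEquiv]
    _ = ∑ᶠ n, coeff d (weylTerm n) :=
        finsum_comp (g := fun n => coeff d (weylTerm n)) _ signedLength_bijective
    _ = if d 0 = d 1 then 1 else 0 := finsum_coeff_weylTerm d
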